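/- arXiv:0906.1861 — 3 statements merged into one kernel-verified Lean document; each statement's English description precedes it below -/
import Mathlib

section
/- For all real numbers x, y with 0 < x, 0 < y and x + y < 1, Appell's second hypergeometric function satisfies F₂(2; 1, 1; 2, 2; x, y) = (ln(1−x) + ln(1−y) − ln(1−x−y)) / (x y). -/
/-- Pochhammer symbol `(x)_k = ∏_{i=0}^{k-1} (x + i)` for a real number `x`. -/
noncomputable def pochR (x : ℝ) (k : ℕ) : ℝ := ∏ i ∈ Finset.range k, (x + i)

/-- Appell's `F₂` double series (real version). -/
noncomputable def appellF2R (a b₁ b₂ c₁ c₂ x y : ℝ) : ℝ :=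
  ∑' p : ℕ × ℕ, pochR a (p.1 + p.2) * pochR b₁ p.1 * pochR b₂ p.2 /
    (pochR c₁ p.1 * pochR c₂ p.2 * (Nat.factorial p.1 : ℝ) * (Nat.factorial p.2 : ℝ)) *
    x ^ p.1 * y ^ p.2

/-!
The coefficient of `x^i y^j` in `F₂(2; 1, 1; 2, 2; x, y)` is `(i+j+1)! / ((i+1)! (j+1)!)`.
Summing over `j` first, the negative binomial series turns row `i` into
`x^i ((1-y)^{-(i+1)} - 1) / ((i+1) y) = ((x/(1-y))^{i+1} - x^{i+1}) / ((i+1) x y)`,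
and summing these over `i` gives two logarithmic series,
`(-log (1 - x/(1-y)) + log (1 - x)) / (x y)`. Since all terms are nonnegative, the
iterated sum is the sum of the double series.
-/

open Nat

lemma pochR_one (k : ℕ) : pochR 1 k = k ! := by
  induction k with
  | zero => simp [pochR]
  | succ n ih =>
    rw [pochR, Finset.prod_range_succ, ← pochR, ih, factorial_succ]
    push_cast; ring

lemma pochR_two (k : ℕ) : pochR 2 k = (k + 1)! := by
  induction k with
  | zero => simp [pochR]
  | succ n ih =>
    rw [pochR, Finset.prod_range_succ, ← pochR, ih, factorial_succ (n + 1)]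
    push_cast; ring

lemma appellF2R_coeff_two_one_one_two_two (i j : ℕ) :
    pochR 2 (i + j) * pochR 1 i * pochR 1 j / (pochR 2 i * pochR 2 j * i ! * j !) =
      ((j + 1 + i).choose i : ℝ) / (i + 1) := by
  have hchoose : ((j + 1 + i).choose i : ℝ) * (j + 1)! * i ! = (j + 1 + i)! := by
    exact_mod_cast add_choose_mul_factorial_mul_factorial (j + 1) i
  rw [pochR_one, pochR_one, pochR_two, pochR_two, pochR_two, div_eq_div_iff (by positivity)
    (by positivity), show i + j + 1 = j + 1 + i by omega, factorial_succ i]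
  push_cast
  linear_combination (-(i ! : ℝ) * j ! * (i + 1)) * hchoose

lemma hasSum_choose_succ_mul_geometric {𝕜 : Type*} [NormedField 𝕜] [CompleteSpace 𝕜]
    (k : ℕ) {r : 𝕜} (hr : ‖r‖ < 1) :
    HasSum (fun n ↦ ((n + 1 + k).choose k : 𝕜) * r ^ (n + 1)) (1 / (1 - r) ^ (k + 1) - 1) := by
  have h := hasSum_choose_mul_geometric_of_norm_lt_one k hr
  rw [← hasSum_nat_add_iff' 1] at h
  simpa using h

lemma hasSum_prod_of_nonneg {α β : Type*} {f : α × β → ℝ} (hf : 0 ≤ f) {g : α → ℝ} {s : ℝ}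
    (hrow : ∀ a, HasSum (fun b ↦ f (a, b)) (g a)) (hg : HasSum g s) : HasSum f s := by
  have hsum : Summable f := (summable_prod_of_nonneg hf).2
    ⟨fun a ↦ (hrow a).summable, hg.summable.congr fun a ↦ (hrow a).tsum_eq.symm⟩
  exact (hsum.hasSum.prod_fiberwise hrow).unique hg ▸ hsum.hasSum

lemma hasSum_appellF2R_two_one_one_two_two_row {x y : ℝ} (hx : x ≠ 0) (hy : y ≠ 0) (hy1 : |y| < 1) (i : ℕ) :
    HasSum (fun j : ℕ ↦ ((j + 1 + i).choose i : ℝ) / (i + 1) * x ^ i * y ^ j)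
      (((x / (1 - y)) ^ (i + 1) / (i + 1) - x ^ (i + 1) / (i + 1)) / (x * y)) := by
  have h1y : 1 - y ≠ 0 := by linarith [le_abs_self y]
  have h := (hasSum_choose_succ_mul_geometric i hy1).mul_right (x ^ i / ((i + 1) * y))
  have hval : ((x / (1 - y)) ^ (i + 1) / (i + 1) - x ^ (i + 1) / (i + 1)) / (x * y) =
      (1 / (1 - y) ^ (i + 1) - 1) * (x ^ i / ((i + 1) * y)) := by
    rw [div_pow]
    field_simp
    ring
  rw [hval]
  exact h.congr_fun fun j ↦ by field_simp; ring

theorem stmt_3 (x y : ℝ) (hx : 0 < x) (hy : 0 < y) (hxy : x + y < 1) :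
    appellF2R 2 1 1 2 2 x y =
      (Real.log (1 - x) + Real.log (1 - y)
        - Real.log (1 - x - y)) / (x * y) := by
  have hx1 : |x| < 1 := by rw [abs_of_pos hx]; linarith
  have hy1 : |y| < 1 := by rw [abs_of_pos hy]; linarith
  have hxy1 : |x / (1 - y)| < 1 := by
    rw [abs_of_pos (by bound), div_lt_one (by linarith)]; linarith
  have hlog : -Real.log (1 - x / (1 - y)) - -Real.log (1 - x) =
      Real.log (1 - x) + Real.log (1 - y) - Real.log (1 - x - y) := by
    have h1y : 1 - y ≠ 0 := by linarith
    rw [show 1 - x / (1 - y) = (1 - x - y) / (1 - y) by field_simp; ring,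
      Real.log_div (by linarith) (by linarith)]
    ring
  have houter := ((Real.hasSum_pow_div_log_of_abs_lt_one hxy1).sub
    (Real.hasSum_pow_div_log_of_abs_lt_one hx1)).div_const (x * y)
  rw [hlog] at houter
  simp_rw [appellF2R, appellF2R_coeff_two_one_one_two_two]
  refine (hasSum_prod_of_nonneg (fun p ↦ by positivity) (fun i ↦ ?_) houter).tsum_eq
  exact hasSum_appellF2R_two_one_one_two_two_row hx.ne' hy.ne' hy1 i
end

section
/- Let a be a real number with a < 2 and a ≠ 1, and let x ∈ (0,1) be real. Then the limiting boundary value of Appell's F₂ along the ray toward the point (x, 1−x) on the singular line u + v = 1 is lim_{t→1⁻} F₂(a; 1, 1; 2, 2; t x, t(1−x)) = (1 − (1−x)^{2−a} − x^{2−a}) / ((1−a)(2−a) x (1−x)), where the powers are real powers of positive reals. -/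
open Topology Filter

/-!
Since `(a-2)_{i+j+2} = (a-2)(a-1)(a)_{i+j}` and `(1)_i / (2)_i = 1/(i+1)`, the series
`F₂(a; 1, 1; 2, 2; x, y)` is `1/((a-1)(a-2)xy)` times the double series
`∑_{i,j ≥ 1} (a-2)_{i+j} xⁱ yʲ / (i! j!)`. Summed over all `i, j ≥ 0`, first in `j` and then in
`i`, the binomial series `∑ (c)ₙ sⁿ / n! = (1-s)^(-c)` evaluates that double series to
`(1-x-y)^(2-a)`; removing the row `i = 0` and the column `j = 0` leaves a closed form which, for
`a < 2`, is continuous up to the line `x + y = 1`.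
-/

lemma pochR_zero (c : ℝ) : pochR c 0 = 1 :=
  Finset.prod_range_zero _

lemma pochR_succ (c : ℝ) (n : ℕ) : pochR c (n + 1) = pochR c n * (c + n) :=
  Finset.prod_range_succ _ _

lemma pochR_add (c : ℝ) (m n : ℕ) : pochR c (m + n) = pochR c m * pochR (c + m) n := by
  simp only [pochR, Finset.prod_range_add, Nat.cast_add, add_assoc]

lemma pochR_eq_ascPochhammer_eval (c : ℝ) (n : ℕ) :
    pochR c n = (ascPochhammer ℝ n).eval c := by
  induction n with
  | zero => simp [pochR_zero]
  | succ n ih => simp [pochR_succ, ascPochhammer_succ_right, ih]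

lemma pochR_one_s4 (n : ℕ) : pochR 1 n = n.factorial := by
  rw [pochR_eq_ascPochhammer_eval, ascPochhammer_eval_one]

lemma pochR_two_s4 (n : ℕ) : pochR 2 n = (n + 1).factorial := by
  simpa [pochR_one_s4, add_comm 1 n, one_add_one_eq_two] using (pochR_add 1 1 n).symm

lemma pochR_sub_two_add_two (a : ℝ) (n : ℕ) :
    pochR (a - 2) (n + 2) = (a - 2) * (a - 1) * pochR a n := by
  have h2 : pochR (a - 2) 2 = (a - 2) * (a - 1) := by
    simp only [pochR, Finset.prod_range_succ, Finset.prod_range_zero]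
    push_cast
    ring
  rw [add_comm, pochR_add, h2, show a - 2 + ((2 : ℕ) : ℝ) = a by push_cast; ring]

lemma pochR_nonneg {c : ℝ} (hc : 0 ≤ c) (n : ℕ) : 0 ≤ pochR c n :=
  Finset.prod_nonneg fun _ _ => by positivity

lemma abs_pochR_le (c : ℝ) (n : ℕ) : |pochR c n| ≤ pochR |c| n := by
  rw [pochR, pochR, Finset.abs_prod]
  exact Finset.prod_le_prod (fun _ _ => abs_nonneg _)
    fun i _ => (abs_add_le _ _).trans (by simp)

lemma pochR_div_factorial_eq_choose (c : ℝ) (n : ℕ) :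
    pochR c n / n.factorial = Ring.choose (c + n - 1) n := by
  rw [← Ring.multichoose_eq, pochR_eq_ascPochhammer_eval,
    ← Polynomial.ascPochhammer_smeval_eq_eval,
    ← Ring.factorial_nsmul_multichoose_eq_ascPochhammer, nsmul_eq_mul]
  field_simp

lemma hasSum_pochR_mul_pow_div_factorial (c : ℝ) {s : ℝ} (hs : |s| < 1) :
    HasSum (fun n => pochR c n * s ^ n / n.factorial) ((1 - s) ^ (-c)) := by
  have h := (Real.one_div_one_sub_rpow_hasFPowerSeriesOnBall_zero c).hasSum
    (y := s) (by simpa [enorm_eq_nnnorm, ← NNReal.coe_lt_coe] using hs)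
  simp only [FormalMultilinearSeries.ofScalars_apply_eq, zero_add, smul_eq_mul] at h
  rw [Real.rpow_neg (by linarith [le_abs_self s]), ← one_div]
  refine h.congr_fun fun n => ?_
  rw [← pochR_div_factorial_eq_choose]
  ring

section double

variable (c : ℝ) {x y : ℝ}

lemma hasSum_pochR_row (hy : |y| < 1) (i : ℕ) :
    HasSum (fun j => pochR c (i + j) * x ^ i * y ^ j / (i.factorial * j.factorial))
      (pochR c i * x ^ i / i.factorial * (1 - y) ^ (-(c + i))) := by
  refine ((hasSum_pochR_mul_pow_div_factorial (c + i) hy).mul_left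
    (pochR c i * x ^ i / i.factorial)).congr_fun fun j => ?_
  rw [pochR_add]
  field_simp

lemma hasSum_pochR_row_sums (hxy : |x| + |y| < 1) :
    HasSum (fun i => pochR c i * x ^ i / i.factorial * (1 - y) ^ (-(c + i)))
      ((1 - (x + y)) ^ (-c)) := by
  have hy : 0 < 1 - y := by linarith [le_abs_self y, abs_nonneg x]
  have hq : |x / (1 - y)| < 1 := by
    rw [abs_div, abs_of_pos hy, div_lt_one hy]
    linarith [le_abs_self y]
  have h := (hasSum_pochR_mul_pow_div_factorial c hq).mul_left ((1 - y) ^ (-c))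
  rw [← Real.mul_rpow hy.le (by linarith [le_abs_self (x / (1 - y))]),
    show (1 - y) * (1 - x / (1 - y)) = 1 - (x + y) by field_simp; ring] at h
  refine h.congr_fun fun i => ?_
  rw [neg_add, Real.rpow_add hy, Real.rpow_neg hy.le (i : ℝ), Real.rpow_natCast, div_pow]
  field_simp

lemma summable_pochR_double (hxy : |x| + |y| < 1) :
    Summable (fun p : ℕ × ℕ =>
      pochR c (p.1 + p.2) * x ^ p.1 * y ^ p.2 / (p.1.factorial * p.2.factorial)) := by
  have habs : |(|x|)| + |(|y|)| < 1 := by rwa [abs_abs, abs_abs]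
  have hy : |(|y|)| < 1 := by linarith [abs_nonneg (|x|)]
  have hmajorant : Summable (fun p : ℕ × ℕ =>
      pochR |c| (p.1 + p.2) * |x| ^ p.1 * |y| ^ p.2 / (p.1.factorial * p.2.factorial)) := by
    refine (summable_prod_of_nonneg fun p => ?_).2
      ⟨fun i => (hasSum_pochR_row |c| hy i).summable,
        (hasSum_pochR_row_sums |c| habs).summable.congr fun i =>
          ((hasSum_pochR_row |c| hy i).tsum_eq).symm⟩
    have := pochR_nonneg (abs_nonneg c) (p.1 + p.2)
    positivity
  refine hmajorant.of_norm_bounded fun p => ?_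
  rw [Real.norm_eq_abs, abs_div, abs_mul, abs_mul, abs_pow, abs_pow,
    abs_of_pos (by positivity : (0 : ℝ) < p.1.factorial * p.2.factorial)]
  gcongr ?_ * _ * _ / _
  exact abs_pochR_le c _

lemma hasSum_pochR_double (hxy : |x| + |y| < 1) :
    HasSum (fun p : ℕ × ℕ =>
      pochR c (p.1 + p.2) * x ^ p.1 * y ^ p.2 / (p.1.factorial * p.2.factorial))
      ((1 - (x + y)) ^ (-c)) := by
  have hsum := summable_pochR_double c hxy
  have hrows := hsum.hasSum.prod_fiberwise (hasSum_pochR_row c (by linarith [abs_nonneg x]))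
  exact hrows.unique (hasSum_pochR_row_sums c hxy) ▸ hsum.hasSum

end double

lemma hasSum_comp_succ_succ {E : Type*} [NormedAddCommGroup E] [CompleteSpace E]
    {f : ℕ × ℕ → E} {S C : E} {R : ℕ → E} (hf : HasSum f S)
    (hR : ∀ i, HasSum (fun j => f (i, j)) (R i)) (hC : HasSum (fun i => f (i, 0)) C) :
    HasSum (fun p : ℕ × ℕ => f (p.1 + 1, p.2 + 1)) (S - R 0 - (C - f (0, 0))) := by
  have hsucc : Summable (fun p : ℕ × ℕ => f (p.1 + 1, p.2 + 1)) :=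
    hf.summable.comp_injective fun p q h => by
      simp only [Prod.mk.injEq, add_left_inj] at h
      exact Prod.ext h.1 h.2
  have hrows (i : ℕ) : HasSum (fun j => f (i + 1, j + 1)) (R (i + 1) - f (i + 1, 0)) := by
    simpa using (hasSum_nat_add_iff' 1).2 (hR (i + 1))
  have hR_sum : HasSum (fun i => R (i + 1)) (S - R 0) := by
    simpa using (hasSum_nat_add_iff' 1).2 (hf.prod_fiberwise hR)
  have hC_sum : HasSum (fun i => f (i + 1, 0)) (C - f (0, 0)) := by
    simpa using (hasSum_nat_add_iff' 1).2 hC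
  exact (hsucc.hasSum.prod_fiberwise hrows).unique (hR_sum.sub hC_sum) ▸ hsucc.hasSum

lemma appellF2R_one_one_two_two_term {a x y : ℝ} (ha1 : a ≠ 1) (ha2 : a ≠ 2) (hx : x ≠ 0)
    (hy : y ≠ 0) (i j : ℕ) :
    pochR a (i + j) * pochR 1 i * pochR 1 j /
        (pochR 2 i * pochR 2 j * i.factorial * j.factorial) * x ^ i * y ^ j =
      pochR (a - 2) ((i + 1) + (j + 1)) * x ^ (i + 1) * y ^ (j + 1) /
        ((i + 1).factorial * (j + 1).factorial) / ((a - 1) * (a - 2) * x * y) := by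
  rw [show i + 1 + (j + 1) = i + j + 2 by ring, pochR_sub_two_add_two, pochR_one_s4, pochR_one_s4,
    pochR_two_s4, pochR_two_s4]
  have ha1' : a - 1 ≠ 0 := sub_ne_zero.2 ha1
  have ha2' : a - 2 ≠ 0 := sub_ne_zero.2 ha2
  simp only [Nat.factorial_succ, Nat.cast_mul]
  field_simp
  ring

theorem appellF2R_one_one_two_two {a x y : ℝ} (ha1 : a ≠ 1) (ha2 : a ≠ 2) (hx : x ≠ 0)
    (hy : y ≠ 0) (hxy : |x| + |y| < 1) :
    appellF2R a 1 1 2 2 x y =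
      ((1 - (x + y)) ^ (2 - a) - (1 - x) ^ (2 - a) - (1 - y) ^ (2 - a) + 1) /
        ((a - 1) * (a - 2) * x * y) := by
  have hc : -(a - 2) = 2 - a := by ring
  have hcol : HasSum (fun i => pochR (a - 2) (i + 0) * x ^ i * y ^ 0 /
      (i.factorial * (0 : ℕ).factorial)) ((1 - x) ^ (2 - a)) := by
    simpa [hc] using hasSum_pochR_mul_pow_div_factorial (a - 2) (s := x)
      (by linarith [abs_nonneg y])
  have h := hasSum_comp_succ_succ (hasSum_pochR_double (a - 2) hxy)
    (hasSum_pochR_row (a - 2) (by linarith [abs_nonneg x])) hcol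
  simp only [hc, add_zero, pochR_zero, pow_zero, Nat.factorial_zero, Nat.cast_zero, Nat.cast_one,
    mul_one, one_mul, div_one] at h
  exact ((h.div_const _).congr_fun fun p =>
    appellF2R_one_one_two_two_term ha1 ha2 hx hy p.1 p.2).tsum_eq.trans (by ring)

theorem stmt_4 (a x : ℝ) (ha2 : a < 2) (ha1 : a ≠ 1) (hx0 : 0 < x) (hx1 : x < 1) :
    Tendsto (fun t : ℝ => appellF2R a 1 1 2 2 (t * x) (t * (1 - x))) (𝓝[<] 1)
      (𝓝 ((1 - (1 - x) ^ (2 - a) - x ^ (2 - a)) / ((1 - a) * (2 - a) * x * (1 - x)))) := by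
  set G : ℝ → ℝ := fun t => ((1 - (t * x + t * (1 - x))) ^ (2 - a) - (1 - t * x) ^ (2 - a)
    - (1 - t * (1 - x)) ^ (2 - a) + 1) / ((a - 1) * (a - 2) * (t * x) * (t * (1 - x))) with hG
  have hclosed : G =ᶠ[𝓝[<] 1] fun t => appellF2R a 1 1 2 2 (t * x) (t * (1 - x)) := by
    filter_upwards [Ioo_mem_nhdsLT one_pos] with t ⟨ht0, ht1⟩
    have htx : 0 < t * x := mul_pos ht0 hx0
    have hty : 0 < t * (1 - x) := mul_pos ht0 (by linarith)
    rw [appellF2R_one_one_two_two ha1 ha2.ne htx.ne' hty.ne'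
      (by rw [abs_of_pos htx, abs_of_pos hty]; linarith)]
  have hcont : ContinuousAt G 1 := by
    have h2a : 0 ≤ 2 - a := by linarith
    have hx1' : 1 - x ≠ 0 := by linarith
    fun_prop (disch := first | exact Or.inr h2a | simp [sub_eq_zero, ha1, ha2.ne, hx0.ne', hx1'])
  have hG1 : G 1 = (1 - (1 - x) ^ (2 - a) - x ^ (2 - a)) / ((1 - a) * (2 - a) * x * (1 - x)) := by
    simp only [hG, one_mul, sub_sub_cancel, show x + (1 - x) = 1 by ring, sub_self]
    rw [Real.zero_rpow (by linarith)]
    ring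
  exact (hG1 ▸ hcont.tendsto.mono_left nhdsWithin_le_nhds).congr' hclosed
end

section
/- Let a, b₁, b₂, c be complex numbers with Re(c − a − b₂) > 0, with c and c − b₂ not nonpositive integers, and let x be complex with |x| < 1. Then Appell's F₁ double series converges at (x, 1), and F₁(a; b₁, b₂; c; x, 1) = (Γ(c) Γ(c−a−b₂) / (Γ(c−a) Γ(c−b₂))) · ₂F₁(a, b₁; c−b₂; x). -/
/-- Pochhammer symbol `(z)_k = ∏_{i=0}^{k-1} (z + i)` for a complex number `z`. -/
noncomputable def poch (z : ℂ) (k : ℕ) : ℂ := ∏ i ∈ Finset.range k, (z + i)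

/-- Terms of Appell's `F₁` double series. -/
noncomputable def appellF1Term (a b₁ b₂ c x y : ℂ) (p : ℕ × ℕ) : ℂ :=
  poch a (p.1 + p.2) * poch b₁ p.1 * poch b₂ p.2 /
    (poch c (p.1 + p.2) * (Nat.factorial p.1 : ℂ) * (Nat.factorial p.2 : ℂ)) *
    x ^ p.1 * y ^ p.2

/-- Appell's `F₁` double series. -/
noncomputable def appellF1 (a b₁ b₂ c x y : ℂ) : ℂ :=
  ∑' p : ℕ × ℕ, appellF1Term a b₁ b₂ c x y p

/-- Gauss hypergeometric series `₂F₁(a,b;c;x)`. -/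
noncomputable def hyp2F1 (a b c x : ℂ) : ℂ :=
  ∑' k : ℕ, poch a k * poch b k / (poch c k * (Nat.factorial k : ℂ)) * x ^ k

open Filter Topology Asymptotics
open scoped Nat

/-!
Fixing `i`, the `i`-th row of the double series is `(a)_i (b₁)_i / ((c)_i i!) · xⁱ` times the
Gauss series `₂F₁(a + i, b₂; c + i; 1)`. Gauss's summation theorem evaluates the latter as
`Γ(c + i) Γ(c - a - b₂) / (Γ(c - a) Γ(c - b₂ + i))`, and `Γ(z + i) = (z)_i Γ(z)` turns the sum of
the rows into `Γ(c) Γ(c - a - b₂) / (Γ(c - a) Γ(c - b₂)) · ₂F₁(a, b₁; c - b₂; x)`.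

Gauss's theorem comes from the contiguous relation `c (c - a - b) F(c) = (c - a) (c - b) F(c + 1)`,
whose termwise difference telescopes. Iterating it `n` times and letting `n → ∞`, `F(c + n) → 1`
by dominated convergence, while the quotient of Pochhammer symbols tends to the quotient of Gamma
values by Euler's limit `(z)_n / (n! n^(z-1)) → 1 / Γ(z)`. The same limit gives
`(a)_n / (c)_n = O((n + 1)^Re(a - c))`, which makes both series absolutely convergent.
-/

section Pochhammer

lemma poch_zero (z : ℂ) : poch z 0 = 1 := by simp [poch]

lemma poch_succ (z : ℂ) (n : ℕ) : poch z (n + 1) = poch z n * (z + n) :=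
  Finset.prod_range_succ _ n

lemma poch_add (z : ℂ) (m n : ℕ) : poch z (m + n) = poch z m * poch (z + m) n := by
  simp only [poch, Finset.prod_range_add, Nat.cast_add, add_assoc]

lemma poch_add_one_mul (z : ℂ) (n : ℕ) : z * poch (z + 1) n = poch z n * (z + n) := by
  rw [← poch_succ, add_comm n, poch_add]
  simp [poch]

lemma poch_eq_ascPochhammer_eval (z : ℂ) (n : ℕ) : poch z n = (ascPochhammer ℂ n).eval z := by
  induction n with
  | zero => simp [poch_zero]
  | succ n ih => rw [poch_succ, ih, ascPochhammer_succ_right, Polynomial.eval_mul]; simp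

lemma poch_one (n : ℕ) : poch 1 n = n ! := by
  rw [poch_eq_ascPochhammer_eval, ← Nat.cast_one, ← ascPochhammer_eval_cast,
    ascPochhammer_nat_eq_ascFactorial, Nat.one_ascFactorial]

lemma poch_ne_zero {z : ℂ} (hz : ∀ k : ℕ, z ≠ -k) (n : ℕ) : poch z n ≠ 0 :=
  Finset.prod_ne_zero_iff.2 fun k _ h => hz k (eq_neg_of_add_eq_zero_left h)

lemma poch_neg_natCast_eq_zero {m n : ℕ} (h : m < n) : poch (-m) n = 0 :=
  Finset.prod_eq_zero (Finset.mem_range.2 h) (neg_add_cancel _)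

lemma Gamma_add_nat {z : ℂ} (hz : ∀ k : ℕ, z ≠ -k) (n : ℕ) :
    Complex.Gamma (z + n) = poch z n * Complex.Gamma z := by
  rw [poch_eq_ascPochhammer_eval, ← Complex.Gamma_add_nat_div_Gamma_eq z hz,
    div_mul_cancel₀ _ (Complex.Gamma_ne_zero hz)]

lemma ne_neg_natCast_of_re_pos {z : ℂ} (hz : 0 < z.re) (k : ℕ) : z ≠ -k := by
  rintro rfl
  simp only [Complex.neg_re, Complex.natCast_re, Left.neg_pos_iff] at hz
  exact k.cast_nonneg.not_gt hz

lemma ne_neg_natCast_add {z : ℂ} (hz : ∀ k : ℕ, z ≠ -k) (n k : ℕ) : z + n ≠ -k :=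
  fun h => hz (k + n) (by push_cast; linear_combination h)

lemma re_add_natCast_le_norm (z : ℂ) (k : ℕ) : z.re + k ≤ ‖z + k‖ := by
  simpa using Complex.re_le_norm (z + k)

lemma pow_re_le_norm_poch {z : ℂ} (hz : 0 ≤ z.re) (n : ℕ) : z.re ^ n ≤ ‖poch z n‖ := by
  calc z.re ^ n = ∏ _k ∈ Finset.range n, z.re := by simp
    _ ≤ ‖poch z n‖ := by
      rw [poch, norm_prod]
      exact Finset.prod_le_prod (fun _ _ => hz) fun k _ =>
        (le_add_of_nonneg_right k.cast_nonneg).trans (re_add_natCast_le_norm z k)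

lemma norm_poch_ofReal_le {r : ℝ} {z : ℂ} (hr : 0 ≤ r) (hz : r ≤ z.re) (n : ℕ) :
    ‖poch r n‖ ≤ ‖poch z n‖ := by
  rw [poch, poch, norm_prod, norm_prod]
  refine Finset.prod_le_prod (fun _ _ => norm_nonneg _) fun k _ => ?_
  calc ‖(r : ℂ) + k‖ = r + k := by
        rw [← Complex.ofReal_natCast, ← Complex.ofReal_add, Complex.norm_of_nonneg (by positivity)]
    _ ≤ z.re + k := by gcongr
    _ ≤ ‖z + k‖ := re_add_natCast_le_norm z k

end Pochhammer

section Asymptotics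

theorem tendsto_poch_div_factorial_mul_cpow (z : ℂ) :
    Tendsto (fun n : ℕ => poch z n / (n ! * (n : ℂ) ^ (z - 1))) atTop
      (𝓝 (Complex.Gamma z)⁻¹) := by
  by_cases hz : ∀ k : ℕ, z ≠ -k
  · have hlim := (tendsto_natCast_div_add_atTop z).mul
      ((Complex.GammaSeq_tendsto_Gamma z).inv₀ (Complex.Gamma_ne_zero hz))
    rw [one_mul] at hlim
    refine hlim.congr' ?_
    filter_upwards [eventually_ne_atTop 0] with n hn
    have hn' : (n : ℂ) ≠ 0 := Nat.cast_ne_zero.2 hn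
    have hnz : (n : ℂ) + z ≠ 0 := fun h => hz n (by linear_combination h)
    have hseq : Complex.GammaSeq z n = (n : ℂ) ^ z * n ! / poch z (n + 1) := rfl
    rw [hseq, poch_succ, Complex.cpow_sub _ _ hn', Complex.cpow_one]
    field_simp
    ring
  · -- at a pole `Gamma z = 0` in Mathlib, so the claimed limit is `0⁻¹ = 0`
    obtain ⟨m, rfl⟩ : ∃ m : ℕ, z = -m := by simpa using hz
    rw [Complex.Gamma_neg_nat_eq_zero, inv_zero]
    refine tendsto_const_nhds.congr' ?_
    filter_upwards [eventually_gt_atTop m] with n hn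
    rw [poch_neg_natCast_eq_zero hn, zero_div]

lemma isEquivalent_natCast_add_one :
    (fun n : ℕ => (n : ℝ)) ~[atTop] (fun n : ℕ => (n : ℝ) + 1) :=
  isEquivalent_of_tendsto_one (tendsto_natCast_div_add_atTop 1)

lemma isBigO_natCast_rpow_add_one (s : ℝ) :
    (fun n : ℕ => (n : ℝ) ^ s) =O[atTop] (fun n : ℕ => ((n : ℝ) + 1) ^ s) :=
  (IsTheta.rpow (Eventually.of_forall fun n => n.cast_nonneg)
    (Eventually.of_forall fun n => by positivity) isEquivalent_natCast_add_one.isTheta).isBigO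

lemma summable_nat_add_one_rpow {s : ℝ} (hs : s < -1) :
    Summable fun n : ℕ => ((n : ℝ) + 1) ^ s := by
  simpa using (summable_nat_add_iff 1).2 (Real.summable_nat_rpow.2 hs)

lemma add_add_one_rpow_le (s : ℝ) {u v : ℝ} (hu : 0 ≤ u) (hv : 0 ≤ v) :
    (u + v + 1) ^ s ≤ (u + 1) ^ |s| * (v + 1) ^ s := by
  rcases le_or_gt 0 s with hs | hs
  · rw [abs_of_nonneg hs, ← Real.mul_rpow (by positivity) (by positivity)]
    exact Real.rpow_le_rpow (by positivity) (by nlinarith) hs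
  · calc (u + v + 1) ^ s ≤ (v + 1) ^ s :=
          Real.rpow_le_rpow_of_nonpos (by positivity) (by linarith) hs.le
      _ ≤ (u + 1) ^ |s| * (v + 1) ^ s :=
          le_mul_of_one_le_left (by positivity) (Real.one_le_rpow (by linarith) (abs_nonneg s))

lemma summable_add_one_rpow_mul_geometric (s : ℝ) {r : ℝ} (hr0 : 0 ≤ r) (hr : r < 1) :
    Summable fun n : ℕ => ((n : ℝ) + 1) ^ s * r ^ n := by
  have hpow : Summable fun n : ℕ => ((n : ℝ) + 1) ^ ⌈s⌉₊ * r ^ n :=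
    summable_of_isBigO_nat
      (summable_pow_mul_geometric_of_norm_lt_one ⌈s⌉₊ (by rwa [Real.norm_of_nonneg hr0]))
      ((isEquivalent_natCast_add_one.symm.isBigO.pow _).mul (isBigO_refl _ _))
  refine hpow.of_nonneg_of_le (fun n => by positivity) fun n => ?_
  gcongr
  rw [← Real.rpow_natCast]
  exact Real.rpow_le_rpow_of_exponent_le (by linarith [n.cast_nonneg (α := ℝ)]) (Nat.le_ceil s)

theorem isBigO_poch_div_poch (a : ℂ) {c : ℂ} (hc : ∀ k : ℕ, c ≠ -k) :
    (fun n : ℕ => poch a n / poch c n) =O[atTop] (fun n : ℕ => ((n : ℝ) + 1) ^ (a - c).re) := by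
  have hlim := (tendsto_poch_div_factorial_mul_cpow a).div
    (tendsto_poch_div_factorial_mul_cpow c) (inv_ne_zero (Complex.Gamma_ne_zero hc))
  have hcpow : (fun n : ℕ => poch a n / poch c n) =O[atTop] (fun n : ℕ => (n : ℂ) ^ (a - c)) := by
    refine isBigO_of_div_tendsto_nhds ?_ _ (hlim.congr' ?_)
    · filter_upwards [eventually_ne_atTop 0] with n hn h
      simp [hn] at h
    · filter_upwards [eventually_ne_atTop 0] with n hn
      have hn' : (n : ℂ) ≠ 0 := Nat.cast_ne_zero.2 hn
      have hsplit : (n : ℂ) ^ (a - 1) = (n : ℂ) ^ (a - c) * (n : ℂ) ^ (c - 1) := by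
        rw [← Complex.cpow_add _ _ hn']
        ring_nf
      have hpoch := poch_ne_zero hc n
      have hpow : (n : ℂ) ^ (c - 1) ≠ 0 := by simp [hn]
      have hfact : (n ! : ℂ) ≠ 0 := Nat.cast_ne_zero.2 n.factorial_ne_zero
      simp only [Pi.div_apply]
      rw [hsplit]
      field_simp
  refine hcpow.trans ((IsBigO.of_bound 1 ?_).trans (isBigO_natCast_rpow_add_one _))
  filter_upwards [eventually_gt_atTop 0] with n hn
  rw [one_mul, Complex.norm_natCast_cpow_of_pos hn, Real.norm_of_nonneg (by positivity)]

theorem exists_norm_poch_div_poch_le (a : ℂ) {c : ℂ} (hc : ∀ k : ℕ, c ≠ -k) :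
    ∃ C > 0, ∀ n : ℕ, ‖poch a n / poch c n‖ ≤ C * ((n : ℝ) + 1) ^ (a - c).re := by
  obtain ⟨C, hC, hle⟩ := bound_of_isBigO_nat_atTop (isBigO_poch_div_poch a hc)
  refine ⟨C, hC, fun n => (hle (by positivity)).trans_eq ?_⟩
  rw [Real.norm_of_nonneg (by positivity)]

end Asymptotics

section Gauss

noncomputable def hyp2F1Coeff (a b c : ℂ) (n : ℕ) : ℂ :=
  poch a n * poch b n / (poch c n * n !)

variable {a b c : ℂ}

lemma isBigO_hyp2F1Coeff (hc : ∀ k : ℕ, c ≠ -k) :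
    hyp2F1Coeff a b c =O[atTop] (fun n : ℕ => ((n : ℝ) + 1) ^ (a + b - c - 1).re) := by
  have h := (isBigO_poch_div_poch a hc).mul
    (isBigO_poch_div_poch b (ne_neg_natCast_of_re_pos (z := 1) (by simp)))
  refine h.congr (fun n => ?_) (fun n => ?_)
  · rw [hyp2F1Coeff, poch_one]
    ring
  · rw [← Real.rpow_add (by positivity)]
    congr 1
    simp only [Complex.sub_re, Complex.add_re, Complex.one_re]
    ring

lemma summable_hyp2F1Coeff (hc : ∀ k : ℕ, c ≠ -k) (hre : 0 < (c - a - b).re) :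
    Summable (hyp2F1Coeff a b c) := by
  refine summable_of_isBigO_nat (summable_nat_add_one_rpow ?_) (isBigO_hyp2F1Coeff hc)
  simp only [Complex.sub_re, Complex.add_re, Complex.one_re] at hre ⊢
  linarith

lemma tendsto_natCast_mul_hyp2F1Coeff (hc : ∀ k : ℕ, c ≠ -k) (hre : 0 < (c - a - b).re) :
    Tendsto (fun n : ℕ => (n : ℂ) * hyp2F1Coeff a b c n) atTop (𝓝 0) := by
  set s := (a + b - c - 1).re
  have hs : s + 1 < 0 := by
    simp only [s, Complex.sub_re, Complex.add_re, Complex.one_re] at hre ⊢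
    linarith
  have hn : (fun n : ℕ => (n : ℂ)) =O[atTop] (fun n : ℕ => (n : ℝ) + 1) :=
    IsBigO.of_bound 1 (Eventually.of_forall fun n => by
      rw [one_mul, Complex.norm_natCast, Real.norm_of_nonneg (by positivity)]
      linarith)
  have hO : (fun n : ℕ => (n : ℂ) * hyp2F1Coeff a b c n) =O[atTop]
      (fun n : ℕ => ((n : ℝ) + 1) ^ (s + 1)) := (hn.mul (isBigO_hyp2F1Coeff hc)).congr_right
    (fun n => by rw [Real.rpow_add_one (by positivity), mul_comm])
  refine hO.trans_tendsto ?_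
  have hlim := (tendsto_rpow_neg_atTop (neg_pos.2 hs)).comp
    (tendsto_atTop_add_const_right atTop 1 tendsto_natCast_atTop_atTop)
  simpa only [neg_neg, Function.comp_def] using hlim

lemma hyp2F1Coeff_contiguous (hc : ∀ k : ℕ, c ≠ -k) (n : ℕ) :
    c * (c - a - b) * hyp2F1Coeff a b c n - (c - a) * (c - b) * hyp2F1Coeff a b (c + 1) n =
      c * n * hyp2F1Coeff a b c n - c * (n + 1 : ℕ) * hyp2F1Coeff a b c (n + 1) := by
  have hc0 : c ≠ 0 := by simpa using hc 0
  have hcn : c + n ≠ 0 := fun h => hc n (eq_neg_of_add_eq_zero_left h)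
  have hpoch := poch_ne_zero hc n
  have hpoch1 : poch (c + 1) n = poch c n * (c + n) / c := by
    rw [eq_div_iff hc0, mul_comm, poch_add_one_mul]
  have hfact : ((n + 1) ! : ℂ) = (n + 1) * n ! := by push_cast [Nat.factorial_succ]; ring
  have hfact0 : (n ! : ℂ) ≠ 0 := Nat.cast_ne_zero.2 n.factorial_ne_zero
  simp only [hyp2F1Coeff, poch_succ, hpoch1, hfact]
  push_cast
  field_simp
  ring

lemma tsum_hyp2F1Coeff_contiguous (hc : ∀ k : ℕ, c ≠ -k) (hre : 0 < (c - a - b).re) :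
    c * (c - a - b) * ∑' n, hyp2F1Coeff a b c n =
      (c - a) * (c - b) * ∑' n, hyp2F1Coeff a b (c + 1) n := by
  have hre1 : 0 < (c + 1 - a - b).re := by
    simp only [Complex.sub_re, Complex.add_re, Complex.one_re] at hre ⊢
    linarith
  have hS := (summable_hyp2F1Coeff hc hre).mul_left (c * (c - a - b))
  have hc1 : ∀ k : ℕ, c + 1 ≠ -k := by simpa using ne_neg_natCast_add hc 1
  have hS1 := (summable_hyp2F1Coeff hc1 hre1).mul_left ((c - a) * (c - b))
  set W : ℕ → ℂ := fun n => c * n * hyp2F1Coeff a b c n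
  have hW : Tendsto W atTop (𝓝 0) := by
    simpa [W, mul_assoc] using (tendsto_natCast_mul_hyp2F1Coeff hc hre).const_mul c
  have htelescope (N : ℕ) : ∑ n ∈ Finset.range N,
      (c * (c - a - b) * hyp2F1Coeff a b c n - (c - a) * (c - b) * hyp2F1Coeff a b (c + 1) n) =
        W 0 - W N := by
    rw [← Finset.sum_range_sub']
    exact Finset.sum_congr rfl fun n _ => hyp2F1Coeff_contiguous hc n
  have hpartial : Tendsto (fun N => ∑ n ∈ Finset.range N,
      (c * (c - a - b) * hyp2F1Coeff a b c n - (c - a) * (c - b) * hyp2F1Coeff a b (c + 1) n))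
      atTop (𝓝 0) := by
    simp_rw [htelescope]
    simpa [W] using hW.neg
  rw [← sub_eq_zero, ← tsum_mul_left, ← tsum_mul_left, ← hS.tsum_sub hS1]
  exact tendsto_nhds_unique (hS.sub hS1).hasSum.tendsto_sum_nat hpartial

lemma poch_mul_tsum_hyp2F1Coeff (hc : ∀ k : ℕ, c ≠ -k) (hre : 0 < (c - a - b).re) (n : ℕ) :
    poch c n * poch (c - a - b) n * ∑' j, hyp2F1Coeff a b c j =
      poch (c - a) n * poch (c - b) n * ∑' j, hyp2F1Coeff a b (c + n) j := by
  induction n with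
  | zero => simp [poch_zero]
  | succ n ih =>
    have hre' : 0 < (c + n - a - b).re := by
      simp only [Complex.sub_re, Complex.add_re, Complex.natCast_re] at hre ⊢
      linarith [n.cast_nonneg (α := ℝ)]
    have hcont := tsum_hyp2F1Coeff_contiguous (ne_neg_natCast_add hc n) hre'
    rw [Nat.cast_succ, ← add_assoc, poch_succ, poch_succ, poch_succ, poch_succ]
    linear_combination (c + n) * (c - a - b + n) * ih + poch (c - a) n * poch (c - b) n * hcont

lemma tendsto_hyp2F1Coeff_add_nat (a b c : ℂ) (j : ℕ) :
    Tendsto (fun n : ℕ => hyp2F1Coeff a b (c + n) (j + 1)) atTop (𝓝 0) := by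
  have hpow : Tendsto (fun n : ℕ => (c + n).re ^ (j + 1)) atTop atTop := by
    simp only [Complex.add_re, Complex.natCast_re]
    exact (tendsto_pow_atTop j.succ_ne_zero).comp
      (tendsto_atTop_add_const_left _ _ tendsto_natCast_atTop_atTop)
  have hnorm : Tendsto (fun n : ℕ => ‖poch (c + n) (j + 1)‖) atTop atTop := by
    refine tendsto_atTop_mono' _ ?_ hpow
    filter_upwards [eventually_ge_atTop ⌈-c.re⌉₊] with n hn
    refine pow_re_le_norm_poch ?_ _
    simp only [Complex.add_re, Complex.natCast_re]
    linarith [Nat.le_of_ceil_le hn]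
  have hinv := tendsto_inv₀_cobounded.comp (tendsto_norm_atTop_iff_cobounded.1 hnorm)
  simpa [hyp2F1Coeff, div_eq_mul_inv, mul_comm, mul_left_comm, mul_assoc] using
    hinv.const_mul (poch a (j + 1) * poch b (j + 1) / (j + 1) !)

lemma tendsto_tsum_hyp2F1Coeff_add_nat (a b c : ℂ) :
    Tendsto (fun n : ℕ => ∑' j, hyp2F1Coeff a b (c + n) j) atTop (𝓝 1) := by
  -- dominate by the coefficients at a real parameter `M` with `Re (M - a - b) > 0`
  set M : ℝ := max 1 (a.re + b.re + 1)
  have hM : 0 < ((M : ℂ) - a - b).re := by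
    simp only [Complex.sub_re, Complex.ofReal_re]
    linarith [le_max_right 1 (a.re + b.re + 1)]
  have hM0 : 0 < M := lt_max_of_lt_left one_pos
  have hsum := summable_hyp2F1Coeff (ne_neg_natCast_of_re_pos (z := M) (by simpa using hM0)) hM
  have hone : ∑' j : ℕ, (if j = 0 then (1 : ℂ) else 0) = 1 := tsum_ite_eq 0 fun _ => 1
  rw [← hone]
  refine tendsto_tsum_of_dominated_convergence hsum.norm (fun j => ?_) ?_
  · rcases j with _ | j
    · simp [hyp2F1Coeff, poch_zero]
    · simpa using tendsto_hyp2F1Coeff_add_nat a b c j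
  · filter_upwards [eventually_ge_atTop ⌈M - c.re⌉₊] with n hn j
    have hle : M ≤ (c + n).re := by
      simp only [Complex.add_re, Complex.natCast_re]
      linarith [Nat.le_of_ceil_le hn]
    have hpos : 0 < ‖poch (M : ℂ) j‖ :=
      norm_pos_iff.2 (poch_ne_zero (ne_neg_natCast_of_re_pos (by simpa using hM0)) j)
    simp only [hyp2F1Coeff, norm_div, norm_mul]
    gcongr
    · exact mul_pos hpos (norm_pos_iff.2 (Nat.cast_ne_zero.2 j.factorial_ne_zero))
    · exact norm_poch_ofReal_le hM0.le hle j

lemma tendsto_poch_mul_poch_div_poch_mul_poch (hc : ∀ k : ℕ, c ≠ -k)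
    (hre : 0 < (c - a - b).re) :
    Tendsto (fun n : ℕ => poch (c - a) n * poch (c - b) n / (poch c n * poch (c - a - b) n))
      atTop (𝓝 (Complex.Gamma c * Complex.Gamma (c - a - b) /
        (Complex.Gamma (c - a) * Complex.Gamma (c - b)))) := by
  have hP := tendsto_poch_div_factorial_mul_cpow
  have hlim := ((hP (c - a)).mul (hP (c - b))).div ((hP c).mul (hP (c - a - b)))
    (mul_ne_zero (inv_ne_zero (Complex.Gamma_ne_zero hc))
      (inv_ne_zero (Complex.Gamma_ne_zero_of_re_pos hre)))
  rw [show ∀ x y z w : ℂ, x⁻¹ * y⁻¹ / (z⁻¹ * w⁻¹) = z * w / (x * y) from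
    fun _ _ _ _ => by simp only [div_eq_mul_inv, mul_inv, inv_inv]; ring] at hlim
  refine hlim.congr' ?_
  filter_upwards [eventually_ne_atTop 0] with n hn
  have hn' : (n : ℂ) ≠ 0 := Nat.cast_ne_zero.2 hn
  have hpow : (n : ℂ) ^ (c - a - 1) * (n : ℂ) ^ (c - b - 1) =
      (n : ℂ) ^ (c - 1) * (n : ℂ) ^ (c - a - b - 1) := by
    rw [← Complex.cpow_add _ _ hn', ← Complex.cpow_add _ _ hn']
    ring_nf
  have hpoch_c := poch_ne_zero hc n
  have hpoch_cab := poch_ne_zero (ne_neg_natCast_of_re_pos hre) n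
  have hfact : (n ! : ℂ) ≠ 0 := Nat.cast_ne_zero.2 n.factorial_ne_zero
  have hcpow : ∀ z : ℂ, (n : ℂ) ^ z ≠ 0 := fun z => by simp [hn]
  simp only [Pi.div_apply]
  field_simp [hcpow]
  linear_combination -(poch (c - a) n * poch (c - b) n) * hpow

theorem tsum_hyp2F1Coeff_eq_Gamma (hc : ∀ k : ℕ, c ≠ -k) (hre : 0 < (c - a - b).re) :
    ∑' n, hyp2F1Coeff a b c n = Complex.Gamma c * Complex.Gamma (c - a - b) /
      (Complex.Gamma (c - a) * Complex.Gamma (c - b)) := by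
  have hlim := (tendsto_poch_mul_poch_div_poch_mul_poch hc hre).mul
    (tendsto_tsum_hyp2F1Coeff_add_nat a b c)
  rw [mul_one] at hlim
  refine tendsto_nhds_unique (tendsto_const_nhds.congr fun n => ?_) hlim
  have hpoch := mul_ne_zero (poch_ne_zero hc n) (poch_ne_zero (ne_neg_natCast_of_re_pos hre) n)
  rw [div_mul_eq_mul_div, ← poch_mul_tsum_hyp2F1Coeff hc hre n, eq_div_iff hpoch, mul_comm]

end Gauss

section Appell

variable {a b₁ b₂ c x : ℂ}

lemma appellF1Term_one_eq_mul_hyp2F1Coeff (hc : ∀ k : ℕ, c ≠ -k) (i j : ℕ) :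
    appellF1Term a b₁ b₂ c x 1 (i, j) =
      hyp2F1Coeff a b₁ c i * x ^ i * hyp2F1Coeff (a + i) b₂ (c + i) j := by
  have hi := poch_ne_zero hc i
  have hj := poch_ne_zero (ne_neg_natCast_add hc i) j
  simp only [appellF1Term, hyp2F1Coeff, poch_add, one_pow, mul_one]
  field_simp

lemma appellF1Term_one_eq_mul_poch_div_poch (i j : ℕ) :
    appellF1Term a b₁ b₂ c x 1 (i, j) = poch a (i + j) / poch c (i + j) *
      (poch b₁ i / poch 1 i) * (poch b₂ j / poch 1 j) * x ^ i := by
  simp only [appellF1Term, poch_one, one_pow, mul_one]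
  ring

theorem summable_appellF1Term_one (hc : ∀ k : ℕ, c ≠ -k) (hre : 0 < (c - a - b₂).re)
    (hx : ‖x‖ < 1) : Summable (appellF1Term a b₁ b₂ c x 1) := by
  have h1 : ∀ k : ℕ, (1 : ℂ) ≠ -k := ne_neg_natCast_of_re_pos (by simp)
  obtain ⟨C₁, hC₁, hac⟩ := exists_norm_poch_div_poch_le a hc
  obtain ⟨C₂, hC₂, hb₁⟩ := exists_norm_poch_div_poch_le b₁ h1
  obtain ⟨C₃, hC₃, hb₂⟩ := exists_norm_poch_div_poch_le b₂ h1
  set σ := (a - c).re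
  have hrow := summable_add_one_rpow_mul_geometric (|σ| + (b₁ - 1).re) (norm_nonneg x) hx
  have hcol : Summable fun j : ℕ => ((j : ℝ) + 1) ^ (σ + (b₂ - 1).re) := by
    refine summable_nat_add_one_rpow ?_
    simp only [σ, Complex.sub_re, Complex.one_re] at hre ⊢
    linarith
  refine Summable.of_norm_bounded ((hrow.mul_of_nonneg hcol (fun _ => by positivity)
    (fun _ => by positivity)).mul_left (C₁ * C₂ * C₃)) fun ⟨i, j⟩ => ?_
  have hij := add_add_one_rpow_le σ (i.cast_nonneg (α := ℝ)) (j.cast_nonneg (α := ℝ))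
  calc ‖appellF1Term a b₁ b₂ c x 1 (i, j)‖
      = ‖poch a (i + j) / poch c (i + j)‖ * ‖poch b₁ i / poch 1 i‖ *
          ‖poch b₂ j / poch 1 j‖ * ‖x‖ ^ i := by
        rw [appellF1Term_one_eq_mul_poch_div_poch, norm_mul, norm_mul, norm_mul, norm_pow]
    _ ≤ C₁ * (((i + j : ℕ) : ℝ) + 1) ^ σ * (C₂ * ((i : ℝ) + 1) ^ (b₁ - 1).re) *
          (C₃ * ((j : ℝ) + 1) ^ (b₂ - 1).re) * ‖x‖ ^ i := by
        gcongr
        exacts [hac _, hb₁ i, hb₂ j]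
    _ ≤ C₁ * (((i : ℝ) + 1) ^ |σ| * ((j : ℝ) + 1) ^ σ) * (C₂ * ((i : ℝ) + 1) ^ (b₁ - 1).re) *
          (C₃ * ((j : ℝ) + 1) ^ (b₂ - 1).re) * ‖x‖ ^ i := by
        gcongr
        simpa using hij
    _ = C₁ * C₂ * C₃ * (((i : ℝ) + 1) ^ (|σ| + (b₁ - 1).re) * ‖x‖ ^ i *
          ((j : ℝ) + 1) ^ (σ + (b₂ - 1).re)) := by
        rw [Real.rpow_add (by positivity), Real.rpow_add (by positivity)]
        ring

lemma tsum_appellF1Term_one_row (hc : ∀ k : ℕ, c ≠ -k) (hcb : ∀ k : ℕ, c - b₂ ≠ -k)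
    (hre : 0 < (c - a - b₂).re) (i : ℕ) :
    ∑' j, appellF1Term a b₁ b₂ c x 1 (i, j) =
      Complex.Gamma c * Complex.Gamma (c - a - b₂) /
        (Complex.Gamma (c - a) * Complex.Gamma (c - b₂)) *
        (hyp2F1Coeff a b₁ (c - b₂) i * x ^ i) := by
  have hshift : c + i - (a + i) - b₂ = c - a - b₂ := by ring
  simp_rw [appellF1Term_one_eq_mul_hyp2F1Coeff hc]
  rw [tsum_mul_left, tsum_hyp2F1Coeff_eq_Gamma (ne_neg_natCast_add hc i) (by rwa [hshift]),
    hshift, show c + i - (a + i) = c - a by ring, show c + i - b₂ = c - b₂ + i by ring,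
    Gamma_add_nat hc, Gamma_add_nat hcb]
  have hpoch_c := poch_ne_zero hc i
  have hpoch_cb := poch_ne_zero hcb i
  have hGamma_cb := Complex.Gamma_ne_zero hcb
  simp only [hyp2F1Coeff]
  field_simp

end Appell

theorem stmt_8 (a b₁ b₂ c x : ℂ) (hre : 0 < (c - a - b₂).re)
    (hc : ∀ k : ℕ, c ≠ -(k : ℂ)) (hcb : ∀ k : ℕ, c - b₂ ≠ -(k : ℂ))
    (hx : ‖x‖ < 1) :
    Summable (appellF1Term a b₁ b₂ c x 1) ∧
    appellF1 a b₁ b₂ c x 1 =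
      Complex.Gamma c * Complex.Gamma (c - a - b₂) /
        (Complex.Gamma (c - a) * Complex.Gamma (c - b₂)) * hyp2F1 a b₁ (c - b₂) x := by
  have hsum := summable_appellF1Term_one (b₁ := b₁) hc hre hx
  refine ⟨hsum, ?_⟩
  rw [appellF1, hsum.tsum_prod' hsum.prod_factor,
    tsum_congr (tsum_appellF1Term_one_row hc hcb hre), tsum_mul_left]
  rfl
end
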